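/- In the coding of a connected bipartite graph H = (A,B,C) relative to an instance I with non-leaf edge e and incident pair Π and parameter n ≥ 1, if ω is a good possible world of H (i.e., there are adjacent a ∈ A', b ∈ B'), then the possible world φ(ω) of the coding contains a subinstance isomorphic to the n-th iterate I^n_{e,Π}; hence φ(ω) admits a homomorphism from I^n_{e,Π}. -/

import Mathlib

/-!
In a good world some kept `a ∈ A'` and kept `b ∈ B'` are joined by an edge `c = (a, b) ∈ C`.
The path `u_a = u_{c,1}, v_{c,1}, u_{c,2}, …, v_{c,n} = v_b` of the coding, with the kept copies
of `F_L` at `u_a` and of `F_R` at `v_b`, is a copy of `I^n_{e,Π}`: the map `u_i ↦ u_{c,i}`,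
`v_i ↦ v_{c,i}`, fixing the other elements of `I`, is injective and sends every fact of the
iterate to a fact of `φ(ω)`. A left- (right-) incident fact mentions `u` (`v`) but not the other
endpoint, so its copy in the iterate depends only on where `u` (`v`) is sent.
-/

noncomputable section
open scoped Classical

/-- An instance over an arity-two signature `σ` with domain elements from `V`:
a finite set of facts `R(a,b)`. -/
abbrev Inst (σ V : Type) := Finset (σ × V × V)

namespace PQE

variable {σ V W : Type}

/-- The domain (active domain) of an instance. -/
def domI (I : Inst σ V) : Finset V :=
  I.image (fun f => f.2.1) ∪ I.image (fun f => f.2.2)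

/-- `h` is a homomorphism from `I` to `J`. -/
def IsHom (h : V → W) (I : Inst σ V) (J : Inst σ W) : Prop :=
  ∀ R a b, (R, a, b) ∈ I → (R, h a, h b) ∈ J

/-- `{u,v}` is an (undirected, Gaifman-graph) edge of `I`. -/
def IsEdge (I : Inst σ V) (u v : V) : Prop :=
  u ≠ v ∧ ∃ R, (R, u, v) ∈ I ∨ (R, v, u) ∈ I

/-- `u` is a leaf: it occurs in exactly one undirected edge. -/
def IsLeaf (I : Inst σ V) (u : V) : Prop := ∃! w, IsEdge I u w

/-- `(u,v)` is a non-leaf edge: an edge neither of whose endpoints is a leaf. -/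
def NonLeafEdge (I : Inst σ V) (u v : V) : Prop :=
  IsEdge I u v ∧ ¬ IsLeaf I u ∧ ¬ IsLeaf I v

/-- Rename the elements of a fact along `h`. -/
def rena (h : V → W) : σ × V × V → σ × W × W := fun f => (f.1, h f.2.1, h f.2.2)

/-- Substitution sending `u ↦ x`, `v ↦ y` and any other element `a ↦ emb a`. -/
def sb (u v : V) (x y : W) (emb : V → W) : V → W :=
  fun a => if a = u then x else if a = v then y else emb a

/-- The fact `f` is covered by the edge `{u,v}`: its domain is `⊆ {u,v}`. -/
def Covered (u v : V) (f : σ × V × V) : Prop :=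
  (f.2.1 = u ∨ f.2.1 = v) ∧ (f.2.2 = u ∨ f.2.2 = v)

/-- The fact `f` mentions neither `u` nor `v`. -/
def NotUV (u v : V) (f : σ × V × V) : Prop :=
  f.2.1 ≠ u ∧ f.2.1 ≠ v ∧ f.2.2 ≠ u ∧ f.2.2 ≠ v

/-- `f` is left-incident to the directed edge `(u,v)`: as a `σ↔`-fact it has the form
`R_L(l,u)` with `l ∉ {u,v}`. -/
def LeftInc (u v : V) (f : σ × V × V) : Prop :=
  (f.2.1 = u ∧ f.2.2 ≠ u ∧ f.2.2 ≠ v) ∨ (f.2.2 = u ∧ f.2.1 ≠ u ∧ f.2.1 ≠ v)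

/-- `f` is right-incident to the directed edge `(u,v)`: as a `σ↔`-fact it has the form
`R_R(v,r)` with `r ∉ {u,v}`. -/
def RightInc (u v : V) (f : σ × V × V) : Prop :=
  (f.2.1 = v ∧ f.2.2 ≠ u ∧ f.2.2 ≠ v) ∨ (f.2.2 = v ∧ f.2.1 ≠ u ∧ f.2.1 ≠ v)

/-- Copy the edge `(u,v)` of `I` onto the pair `(x,y)` (all facts covered by `(u,v)`,
renamed by `u ↦ x`, `v ↦ y`, other elements embedded by `emb`). -/
def copyEdge (I : Inst σ V) (u v : V) (x y : W) (emb : V → W) : Inst σ W :=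
  (I.filter (Covered u v)).image (rena (sb u v x y emb))

/-- `(FL, FR)` is an incident pair of the edge `(u,v)` in `I`. -/
def IncidentPair (I : Inst σ V) (u v : V) (FL FR : σ × V × V) : Prop :=
  FL ∈ I ∧ LeftInc u v FL ∧ FR ∈ I ∧ RightInc u v FR

end PQE

namespace PQE

variable {σ V : Type}

/-- The `n`-th iterate `I^n_{e,Π}` of the non-leaf edge `e = (u,v)` in `I` relative to the
incident pair `Π = (FL, FR)`.  The fresh elements are `u_i = Sum.inr (false, i)` and
`v_i = Sum.inr (true, i)` (for `1 ≤ i ≤ n`); the remaining elements of `I` are embedded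
via `Sum.inl`.  The edge `e` is replaced by a back-and-forth path of `2n-1` copies of `e`,
`FL` is kept at `u_1` and `FR` at `v_n`, and all other left-incident (resp. right-incident)
facts are copied onto every `u_i` (resp. every `v_i`). -/
def iter (I : Inst σ V) (u v : V) (FL FR : σ × V × V) (n : ℕ) :
    Inst σ (V ⊕ Bool × ℕ) :=
  let uu : ℕ → V ⊕ Bool × ℕ := fun i => Sum.inr (false, i)
  let vv : ℕ → V ⊕ Bool × ℕ := fun i => Sum.inr (true, i)
  (I.filter (NotUV u v)).image (rena Sum.inl)
  ∪ {rena (sb u v (uu 1) (vv n) Sum.inl) FL, rena (sb u v (uu 1) (vv n) Sum.inl) FR}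
  ∪ (Finset.range n).biUnion (fun i =>
      (I.filter (fun f => LeftInc u v f ∧ f ≠ FL)).image
        (rena (sb u v (uu (i+1)) (vv n) Sum.inl)))
  ∪ (Finset.range n).biUnion (fun i =>
      (I.filter (fun f => RightInc u v f ∧ f ≠ FR)).image
        (rena (sb u v (uu 1) (vv (i+1)) Sum.inl)))
  ∪ (Finset.range n).biUnion (fun i => copyEdge I u v (uu (i+1)) (vv (i+1)) Sum.inl)
  ∪ (Finset.range (n-1)).biUnion (fun i => copyEdge I u v (uu (i+2)) (vv (i+1)) Sum.inl)

end PQE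

namespace PQE

/-- Vertex type for the PP2DNF coding: original elements, the vertices `u_a` (`a ∈ A`),
the vertices `v_b` (`b ∈ B`), and the inner path copies `u_{c,i}`, `v_{c,i}`. -/
abbrev CWt (V α β : Type) := V ⊕ (α ⊕ (β ⊕ ((α × β) × Bool × ℕ)))

variable {σ : Type}

/-- The vertex `u_a`. -/
def cwUA (V α β : Type) (a : α) : CWt V α β := Sum.inr (Sum.inl a)

/-- The vertex `v_b`. -/
def cwVB (V α β : Type) (b : β) : CWt V α β := Sum.inr (Sum.inr (Sum.inl b))

/-- The vertex `u_{c,i}` (with `u_{c,1} = u_a` for `c = (a,b)`). -/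
def cwU (V α β : Type) (n : ℕ) (c : α × β) (i : ℕ) : CWt V α β :=
  if i = 1 then cwUA V α β c.1 else Sum.inr (Sum.inr (Sum.inr (c, false, i)))

/-- The vertex `v_{c,i}` (with `v_{c,n} = v_b` for `c = (a,b)`). -/
def cwV (V α β : Type) (n : ℕ) (c : α × β) (i : ℕ) : CWt V α β :=
  if i = n then cwVB V α β c.2 else Sum.inr (Sum.inr (Sum.inr (c, true, i)))

/-- The possible world `φ(ω)` of the PP2DNF coding of the bipartite graph `(A,B,C)`
relative to `I`, edge `(u,v)`, incident pair `(FL,FR)` and parameter `n`, for the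
possible world `ω = (A', B')`: the copy of `FL` at `u_a` is kept iff `a ∈ A'`, and the
copy of `FR` at `v_b` is kept iff `b ∈ B'`; all other facts of the coding are present.
(The full coding is recovered with `A' = A`, `B' = B`.) -/
def ppCoding {V α β : Type} (I : Inst σ V) (u v : V) (FL FR : σ × V × V) (n : ℕ)
    (A : Finset α) (B : Finset β) (C : Finset (α × β))
    (A' : Finset α) (B' : Finset β) : Inst σ (CWt V α β) :=
  (I.filter (NotUV u v)).image (rena Sum.inl)
  ∪ A'.image (fun a => rena (sb u v (cwUA V α β a) (cwUA V α β a) Sum.inl) FL)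
  ∪ B'.image (fun b => rena (sb u v (cwVB V α β b) (cwVB V α β b) Sum.inl) FR)
  ∪ A.biUnion (fun a =>
      (I.filter (fun f => LeftInc u v f ∧ f ≠ FL)).image
        (rena (sb u v (cwUA V α β a) (cwUA V α β a) Sum.inl)))
  ∪ C.biUnion (fun c => (Finset.Icc 2 n).biUnion (fun i =>
      (I.filter (fun f => LeftInc u v f ∧ f ≠ FL)).image
        (rena (sb u v (cwU V α β n c i) (cwU V α β n c i) Sum.inl))))
  ∪ B.biUnion (fun b =>
      (I.filter (fun f => RightInc u v f ∧ f ≠ FR)).image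
        (rena (sb u v (cwVB V α β b) (cwVB V α β b) Sum.inl)))
  ∪ C.biUnion (fun c => (Finset.Icc 1 (n-1)).biUnion (fun i =>
      (I.filter (fun f => RightInc u v f ∧ f ≠ FR)).image
        (rena (sb u v (cwV V α β n c i) (cwV V α β n c i) Sum.inl))))
  ∪ C.biUnion (fun c => (Finset.Icc 1 n).biUnion (fun i =>
      copyEdge I u v (cwU V α β n c i) (cwV V α β n c i) Sum.inl))
  ∪ C.biUnion (fun c => (Finset.Icc 1 (n-1)).biUnion (fun i =>
      copyEdge I u v (cwU V α β n c (i+1)) (cwV V α β n c i) Sum.inl))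

/-- Adjacency on the vertices `α ⊕ β` of the bipartite graph with edge set `C`. -/
def BipAdj {α β : Type} (C : Finset (α × β)) : (α ⊕ β) → (α ⊕ β) → Prop := fun x y =>
  ∃ c ∈ C, (x = Sum.inl c.1 ∧ y = Sum.inr c.2) ∨ (x = Sum.inr c.2 ∧ y = Sum.inl c.1)

/-- The bipartite graph `(A,B,C)` is connected. -/
def BipConn {α β : Type} (A : Finset α) (B : Finset β) (C : Finset (α × β)) : Prop :=
  ∀ x ∈ (A.image (Sum.inl : α → α ⊕ β) ∪ B.image Sum.inr),
  ∀ y ∈ (A.image (Sum.inl : α → α ⊕ β) ∪ B.image Sum.inr),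
    Relation.ReflTransGen (BipAdj C) x y

end PQE

namespace PQE

section Renaming

variable {σ V W X : Type}

lemma rena_rena (g : W → X) (f : V → W) (t : σ × V × V) :
    rena g (rena f t) = rena (g ∘ f) t := rfl

lemma comp_sb (g : W → X) (u v : V) (x y : W) (e : V → W) :
    g ∘ sb u v x y e = sb u v (g x) (g y) (g ∘ e) := by
  funext z
  simp only [Function.comp, sb]
  split_ifs <;> rfl

lemma isHom_of_forall_rena_mem {h : V → W} {I : Inst σ V} {J : Inst σ W}
    (hIJ : ∀ f ∈ I, rena h f ∈ J) : IsHom h I J :=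
  fun _ _ _ hf => hIJ _ hf

lemma LeftInc.rena_sb_eq {u v : V} {f : σ × V × V} (hf : LeftInc u v f)
    (x y y' : W) (e : V → W) : rena (sb u v x y e) f = rena (sb u v x y' e) f := by
  obtain ⟨R, p, q⟩ := f
  rcases hf with ⟨rfl, hu, hv⟩ | ⟨rfl, hu, hv⟩ <;> simp [rena, sb, hu, hv]

lemma RightInc.rena_sb_eq {u v : V} (huv : u ≠ v) {f : σ × V × V} (hf : RightInc u v f)
    (x x' y : W) (e : V → W) : rena (sb u v x y e) f = rena (sb u v x' y e) f := by
  obtain ⟨R, p, q⟩ := f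
  rcases hf with ⟨rfl, hu, hv⟩ | ⟨rfl, hu, hv⟩ <;> simp [rena, sb, hu, hv, huv.symm]

lemma rena_mem_copyEdge {I : Inst σ V} {u v : V} {x y : W} {e : V → W} {f : σ × W × W}
    (g : W → X) (hf : f ∈ copyEdge I u v x y e) :
    rena g f ∈ copyEdge I u v (g x) (g y) (g ∘ e) := by
  obtain ⟨f', hf', rfl⟩ := Finset.mem_image.mp hf
  rw [rena_rena, comp_sb]
  exact Finset.mem_image_of_mem _ hf'

end Renaming

section Coding

variable {σ V α β : Type} {I : Inst σ V} {u v : V} {FL FR : σ × V × V} {n : ℕ}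
  {A : Finset α} {B : Finset β} {C : Finset (α × β)} {A' : Finset α} {B' : Finset β}

lemma cwU_one (c : α × β) : cwU V α β n c 1 = cwUA V α β c.1 := if_pos rfl

lemma cwV_self (c : α × β) : cwV V α β n c n = cwVB V α β c.2 := if_pos rfl

lemma rena_inl_mem_ppCoding {g : σ × V × V} (hg : g ∈ I) (hgN : NotUV u v g) :
    rena Sum.inl g ∈ ppCoding I u v FL FR n A B C A' B' := by
  simp only [ppCoding, Finset.mem_union]
  exact .inl <| .inl <| .inl <| .inl <| .inl <| .inl <| .inl <| .inl <|
    Finset.mem_image_of_mem _ (Finset.mem_filter.mpr ⟨hg, hgN⟩)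

lemma rena_FL_mem_ppCoding {a : α} (ha : a ∈ A') :
    rena (sb u v (cwUA V α β a) (cwUA V α β a) Sum.inl) FL ∈
      ppCoding I u v FL FR n A B C A' B' := by
  simp only [ppCoding, Finset.mem_union]
  exact .inl <| .inl <| .inl <| .inl <| .inl <| .inl <| .inl <| .inr <|
    Finset.mem_image_of_mem _ ha

lemma rena_FR_mem_ppCoding {b : β} (hb : b ∈ B') :
    rena (sb u v (cwVB V α β b) (cwVB V α β b) Sum.inl) FR ∈
      ppCoding I u v FL FR n A B C A' B' := by
  simp only [ppCoding, Finset.mem_union]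
  exact .inl <| .inl <| .inl <| .inl <| .inl <| .inl <| .inr <|
    Finset.mem_image_of_mem _ hb

lemma LeftInc.rena_mem_ppCoding {g : σ × V × V} (hgL : LeftInc u v g) (hg : g ∈ I)
    (hgFL : g ≠ FL) {c : α × β} (hc : c ∈ C) (ha : c.1 ∈ A) {i : ℕ} (hi : 1 ≤ i)
    (hin : i ≤ n) :
    rena (sb u v (cwU V α β n c i) (cwU V α β n c i) Sum.inl) g ∈
      ppCoding I u v FL FR n A B C A' B' := by
  have hg' : g ∈ I.filter (fun f => LeftInc u v f ∧ f ≠ FL) :=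
    Finset.mem_filter.mpr ⟨hg, hgL, hgFL⟩
  simp only [ppCoding, Finset.mem_union, Finset.mem_biUnion, Finset.mem_Icc]
  obtain rfl | hi := hi.eq_or_lt
  · rw [cwU_one]
    exact .inl <| .inl <| .inl <| .inl <| .inl <| .inr ⟨c.1, ha, Finset.mem_image_of_mem _ hg'⟩
  · exact .inl <| .inl <| .inl <| .inl <| .inr
      ⟨c, hc, i, ⟨hi, hin⟩, Finset.mem_image_of_mem _ hg'⟩

lemma RightInc.rena_mem_ppCoding {g : σ × V × V} (hgR : RightInc u v g) (hg : g ∈ I)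
    (hgFR : g ≠ FR) {c : α × β} (hc : c ∈ C) (hb : c.2 ∈ B) {j : ℕ} (hj : 1 ≤ j)
    (hjn : j ≤ n) :
    rena (sb u v (cwV V α β n c j) (cwV V α β n c j) Sum.inl) g ∈
      ppCoding I u v FL FR n A B C A' B' := by
  have hg' : g ∈ I.filter (fun f => RightInc u v f ∧ f ≠ FR) :=
    Finset.mem_filter.mpr ⟨hg, hgR, hgFR⟩
  simp only [ppCoding, Finset.mem_union, Finset.mem_biUnion, Finset.mem_Icc]
  obtain rfl | hjn := hjn.eq_or_lt
  · rw [cwV_self]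
    exact .inl <| .inl <| .inl <| .inr ⟨c.2, hb, Finset.mem_image_of_mem _ hg'⟩
  · exact .inl <| .inl <| .inr ⟨c, hc, j, ⟨hj, by omega⟩, Finset.mem_image_of_mem _ hg'⟩

lemma copyEdge_subset_ppCoding {c : α × β} (hc : c ∈ C) {i : ℕ} (hi : 1 ≤ i)
    (hin : i ≤ n) :
    copyEdge I u v (cwU V α β n c i) (cwV V α β n c i) Sum.inl ⊆
      ppCoding I u v FL FR n A B C A' B' := fun _ hf => by
  simp only [ppCoding, Finset.mem_union, Finset.mem_biUnion, Finset.mem_Icc]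
  exact .inl <| .inr ⟨c, hc, i, ⟨hi, hin⟩, hf⟩

lemma copyEdge_succ_subset_ppCoding {c : α × β} (hc : c ∈ C) {i : ℕ} (hi : 1 ≤ i)
    (hin : i + 1 ≤ n) :
    copyEdge I u v (cwU V α β n c (i + 1)) (cwV V α β n c i) Sum.inl ⊆
      ppCoding I u v FL FR n A B C A' B' := fun _ hf => by
  simp only [ppCoding, Finset.mem_union, Finset.mem_biUnion, Finset.mem_Icc]
  exact .inr ⟨c, hc, i, ⟨hi, by omega⟩, hf⟩

def pathEmbedding (V : Type) {α β : Type} (n : ℕ) (c : α × β) :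
    V ⊕ Bool × ℕ → CWt V α β :=
  Sum.elim Sum.inl fun p => cond p.1 (cwV V α β n c p.2) (cwU V α β n c p.2)

lemma pathEmbedding_injective (c : α × β) : Function.Injective (pathEmbedding V n c) := by
  rintro (x | ⟨(_ | _), i⟩) (y | ⟨(_ | _), j⟩) hxy <;>
    simp only [pathEmbedding, Sum.elim_inl, Sum.elim_inr, cond_false, cond_true,
      cwU, cwV, cwUA, cwVB] at hxy <;>
    (try split_ifs at hxy) <;> simp_all

lemma pathEmbedding_comp_sb (c : α × β) (i j : ℕ) :
    pathEmbedding V n c ∘ sb u v (Sum.inr (false, i)) (Sum.inr (true, j)) Sum.inl =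
      sb u v (cwU V α β n c i) (cwV V α β n c j) Sum.inl :=
  comp_sb _ _ _ _ _ _

lemma rena_pathEmbedding_mem_ppCoding (huv : u ≠ v) (hFL : LeftInc u v FL)
    (hFR : RightInc u v FR) (hA' : A' ⊆ A) (hB' : B' ⊆ B) {c : α × β} (hc : c ∈ C)
    (ha : c.1 ∈ A') (hb : c.2 ∈ B') {f : σ × (V ⊕ Bool × ℕ) × (V ⊕ Bool × ℕ)}
    (hf : f ∈ iter I u v FL FR n) :
    rena (pathEmbedding V n c) f ∈ ppCoding I u v FL FR n A B C A' B' := by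
  simp only [iter, Finset.mem_union, Finset.mem_biUnion, Finset.mem_image, Finset.mem_insert,
    Finset.mem_singleton, Finset.mem_filter, Finset.mem_range] at hf
  rcases hf with ((((⟨g, ⟨hg, hgN⟩, rfl⟩ | rfl | rfl) |
    ⟨i, hi, g, ⟨hg, hgL, hgFL⟩, rfl⟩) | ⟨j, hj, g, ⟨hg, hgR, hgFR⟩, rfl⟩) |
    ⟨i, hi, hf⟩) | ⟨i, hi, hf⟩
  · exact rena_inl_mem_ppCoding hg hgN
  · rw [rena_rena, pathEmbedding_comp_sb, hFL.rena_sb_eq _ _ (cwU V α β n c 1), cwU_one]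
    exact rena_FL_mem_ppCoding ha
  · rw [rena_rena, pathEmbedding_comp_sb, hFR.rena_sb_eq huv _ (cwV V α β n c n), cwV_self]
    exact rena_FR_mem_ppCoding hb
  · rw [rena_rena, pathEmbedding_comp_sb, hgL.rena_sb_eq _ _ (cwU V α β n c (i + 1))]
    exact hgL.rena_mem_ppCoding hg hgFL hc (hA' ha) (by omega) hi
  · rw [rena_rena, pathEmbedding_comp_sb, hgR.rena_sb_eq huv _ (cwV V α β n c (j + 1))]
    exact hgR.rena_mem_ppCoding hg hgFR hc (hB' hb) (by omega) hj
  · exact copyEdge_subset_ppCoding hc (by omega) hi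
      (rena_mem_copyEdge (pathEmbedding V n c) hf)
  · exact copyEdge_succ_subset_ppCoding hc (by omega) (by omega)
      (rena_mem_copyEdge (pathEmbedding V n c) hf)

end Coding

end PQE

open PQE

theorem ppCoding_good_world_contains_iterate_general {σ V α β : Type}
    (I : Inst σ V) (u v : V) (FL FR : σ × V × V)
    (hE : NonLeafEdge I u v) (hPi : IncidentPair I u v FL FR)
    (n : ℕ)
    (A : Finset α) (B : Finset β) (C : Finset (α × β))
    (A' : Finset α) (B' : Finset β) (hA' : A' ⊆ A) (hB' : B' ⊆ B)
    (hgood : ∃ a ∈ A', ∃ b ∈ B', (a, b) ∈ C) :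
    ∃ h : (V ⊕ Bool × ℕ) → CWt V α β,
      Set.InjOn h ↑(domI (iter I u v FL FR n)) ∧
      IsHom h (iter I u v FL FR n) (ppCoding I u v FL FR n A B C A' B') := by
  obtain ⟨a, ha, b, hb, hab⟩ := hgood
  refine ⟨pathEmbedding V n (a, b), (pathEmbedding_injective (a, b)).injOn, ?_⟩
  exact isHom_of_forall_rena_mem fun f hf =>
    rena_pathEmbedding_mem_ppCoding hE.1.1 hPi.2.1 hPi.2.2.2 hA' hB' hab ha hb hf

/-- In the PP2DNF coding of a connected bipartite graph `(A,B,C)`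
relative to `I`, non-leaf edge `(u,v)`, incident pair `(FL,FR)` and `n ≥ 1`: if
`ω = (A',B')` is a good possible world (some kept `a ∈ A'` is adjacent to a kept
`b ∈ B'`), then `φ(ω)` contains a subinstance isomorphic to the iterate `I^n_{e,Π}`;
in particular it admits a homomorphism from `I^n_{e,Π}` which is injective on its
domain. -/
theorem ppCoding_good_world_contains_iterate {σ V α β : Type}
    (I : Inst σ V) (u v : V) (FL FR : σ × V × V)
    (hE : NonLeafEdge I u v) (hPi : IncidentPair I u v FL FR)
    (n : ℕ) (hn : 1 ≤ n)
    (A : Finset α) (B : Finset β) (C : Finset (α × β))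
    (hC : C ⊆ A ×ˢ B) (hconn : BipConn A B C)
    (A' : Finset α) (B' : Finset β) (hA' : A' ⊆ A) (hB' : B' ⊆ B)
    (hgood : ∃ a ∈ A', ∃ b ∈ B', (a, b) ∈ C) :
    ∃ h : (V ⊕ Bool × ℕ) → CWt V α β,
      Set.InjOn h ↑(domI (iter I u v FL FR n)) ∧
      IsHom h (iter I u v FL FR n) (ppCoding I u v FL FR n A B C A' B') :=
  ppCoding_good_world_contains_iterate_general I u v FL FR hE hPi n A B C A' B' hA' hB' hgood
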